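/- Let $H_+$ and $H_-$ be Hilbert spaces with a continuous sesquilinear duality pairing $(\cdot,\cdot) : H_- \times H_+ \to \mathbb{C}$ that realizes $H_-$ as the dual of $H_+$ (i.e. $\|g\|_{H_+} = \sup_{h \neq 0} |(h, g)| / \|h\|_{H_-}$). Let $\dtn : H_+ \to H_-$ be a bounded bijective linear operator, and suppose there is a Hilbert space $\mathcal{E}$ (energy space) and a bounded linear map $g \mapsto u_g \in \mathcal{E}$ such that $-(\dtn g, \overline{h}) = \langle u_g, u_h \rangle_{\mathcal{E}}$ for all $g, h \in H_+$. Then $\dtn$ is coercive: for all $g \in H_+$, $-(\dtn g, \overline{g}) \geq \|\dtn^{-1}\|^{-1}_{H_- \to H_+} \|g\|_{H_+}^2$. -/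

import Mathlib

/-- Abstract coercivity of the exterior Dirichlet-to-Neumann map.
`B` is a continuous sesquilinear duality pairing between `H₋` and `H₊` realizing `H₋` as
the dual of `H₊` (so that `‖g‖ = sup_{h ≠ 0} |(h,g)|/‖h‖`), `D : H₊ → H₋` is bounded
and bijective (with bounded inverse), and `-(D g, h̄) = ⟪u_g, u_h⟫_E` for a bounded
linear map `g ↦ u_g` into an energy Hilbert space `E`.  Then
`-(D g, ḡ) ≥ ‖D⁻¹‖⁻¹ ‖g‖²` for all `g ∈ H₊`. -/
theorem stmt4 {Hp Hm E : Type*}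
    [NormedAddCommGroup Hp] [NormedSpace ℂ Hp]
    [NormedAddCommGroup Hm] [NormedSpace ℂ Hm]
    [NormedAddCommGroup E] [InnerProductSpace ℂ E] [CompleteSpace E]
    (B : Hm →L[ℂ] Hp →SL[starRingEnd ℂ] ℂ)
    (hdual : ∀ g : Hp, ‖g‖ = ⨆ h : {h : Hm // h ≠ 0}, ‖B h.1 g‖ / ‖h.1‖)
    (D : Hp ≃L[ℂ] Hm) (U : Hp →L[ℂ] E)
    (hU : ∀ g h : Hp, -(B (D g) h) = (inner ℂ (U h) (U g) : ℂ)) :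
    ∀ g : Hp, ‖(D.symm : Hm →L[ℂ] Hp)‖⁻¹ * ‖g‖ ^ 2 ≤ (-(B (D g) g)).re := by
  intro g
  set C : ℝ := ‖(D.symm : Hm →L[ℂ] Hp)‖ with hCdef
  have hC0 : 0 ≤ C := norm_nonneg _
  -- energy identity
  have hUsq : ∀ k : Hp, ‖U k‖ ^ 2 = (-(B (D k) k)).re := by
    intro k
    rw [hU k k]
    exact (inner_self_eq_norm_sq (𝕜 := ℂ) (U k)).symm
  -- pairing bound
  have hpair : ∀ (h : Hm) (g' : Hp), ‖B h g'‖ ≤ ‖h‖ * ‖g'‖ := by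
    intro h g'
    by_cases hh : h = 0
    · simp [hh]
    · have hb : BddAbove (Set.range fun h' : {h : Hm // h ≠ 0} => ‖B h'.1 g'‖ / ‖h'.1‖) := by
        refine ⟨‖B‖ * ‖g'‖, ?_⟩
        rintro x ⟨h', rfl⟩
        have hpos : 0 < ‖h'.1‖ := norm_pos_iff.mpr h'.2
        rw [div_le_iff₀ hpos]
        calc ‖B h'.1 g'‖ ≤ ‖B h'.1‖ * ‖g'‖ := (B h'.1).le_opNorm g'
          _ ≤ ‖B‖ * ‖h'.1‖ * ‖g'‖ := by
              have := B.le_opNorm h'.1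
              nlinarith [norm_nonneg g']
          _ = ‖B‖ * ‖g'‖ * ‖h'.1‖ := by ring
      have hle := le_ciSup hb ⟨h, hh⟩
      rw [← hdual g'] at hle
      have hpos : 0 < ‖h‖ := norm_pos_iff.mpr hh
      rw [div_le_iff₀ hpos] at hle
      linarith [hle]
  -- bound on ‖U (D.symm h)‖
  have hUk : ∀ h : Hm, ‖U ((D.symm : Hm →L[ℂ] Hp) h)‖ ≤ Real.sqrt C * ‖h‖ := by
    intro h
    set k : Hp := (D.symm : Hm →L[ℂ] Hp) h with hk
    have hDk : D k = h := D.apply_symm_apply h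
    have h1 : ‖U k‖ ^ 2 ≤ C * ‖h‖ ^ 2 := by
      rw [hUsq k, hDk]
      have h2 : (-(B h k)).re ≤ ‖h‖ * ‖k‖ := by
        calc (-(B h k)).re ≤ ‖-(B h k)‖ := Complex.re_le_norm _
          _ = ‖B h k‖ := norm_neg _
          _ ≤ ‖h‖ * ‖k‖ := hpair h k
      have h3 : ‖k‖ ≤ C * ‖h‖ := (D.symm : Hm →L[ℂ] Hp).le_opNorm h
      nlinarith [norm_nonneg h, norm_nonneg k]
    calc ‖U k‖ = Real.sqrt (‖U k‖ ^ 2) := by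
          rw [Real.sqrt_sq (norm_nonneg _)]
      _ ≤ Real.sqrt (C * ‖h‖ ^ 2) := Real.sqrt_le_sqrt h1
      _ = Real.sqrt C * ‖h‖ := by
          rw [Real.sqrt_mul hC0, Real.sqrt_sq (norm_nonneg _)]
  -- main bound ‖g‖ ≤ √C ‖U g‖
  have hmain : ‖g‖ ≤ Real.sqrt C * ‖U g‖ := by
    rw [hdual g]
    by_cases hne : Nonempty {h : Hm // h ≠ 0}
    · apply ciSup_le
      intro h'
      have hpos : 0 < ‖h'.1‖ := norm_pos_iff.mpr h'.2
      rw [div_le_iff₀ hpos]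
      have hB : B h'.1 g = -(inner ℂ (U g) (U ((D.symm : Hm →L[ℂ] Hp) h'.1)) : ℂ) := by
        have hthis := hU ((D.symm : Hm →L[ℂ] Hp) h'.1) g
        have hDk2 : D ((D.symm : Hm →L[ℂ] Hp) h'.1) = h'.1 := D.apply_symm_apply h'.1
        rw [hDk2] at hthis
        exact neg_eq_iff_eq_neg.mp hthis
      rw [hB, norm_neg]
      calc ‖(inner ℂ (U g) (U ((D.symm : Hm →L[ℂ] Hp) h'.1)) : ℂ)‖
          ≤ ‖U g‖ * ‖U ((D.symm : Hm →L[ℂ] Hp) h'.1)‖ := norm_inner_le_norm _ _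
        _ ≤ ‖U g‖ * (Real.sqrt C * ‖h'.1‖) := by
            have := hUk h'.1
            nlinarith [norm_nonneg (U g)]
        _ = Real.sqrt C * ‖U g‖ * ‖h'.1‖ := by ring
    · haveI : IsEmpty {h : Hm // h ≠ 0} := not_nonempty_iff.mp hne
      rw [Real.iSup_of_isEmpty]
      positivity
  -- finish
  rw [← hUsq g]
  have hsq : ‖g‖ ^ 2 ≤ C * ‖U g‖ ^ 2 := by
    have h1 : ‖g‖ ^ 2 ≤ (Real.sqrt C * ‖U g‖) ^ 2 := by
      nlinarith [norm_nonneg g, Real.sqrt_nonneg C, norm_nonneg (U g)]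
    calc ‖g‖ ^ 2 ≤ (Real.sqrt C * ‖U g‖) ^ 2 := h1
      _ = C * ‖U g‖ ^ 2 := by
          rw [mul_pow, Real.sq_sqrt hC0]
  rcases eq_or_lt_of_le hC0 with hC | hC
  · rw [← hC]; simp
  · rw [inv_mul_le_iff₀ hC]
    linarith
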